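/- arXiv:1905.06881 — 2 statements merged into one kernel-verified Lean document; each statement's English description precedes it below -/
import Mathlib

section
/- For every integer M ≥ 1 and every real number p with 0 < p ≤ 1, the inequality Σ_{k=1}^{M} C(M,k) (−1)^{k+1} / (1 − (1−p)^k) ≤ 1 / p^M holds, where C(M,k) denotes the binomial coefficient. -/
/-!
With `q = 1 - p`, both sides are sums of geometric series in `n`: the left side equals
`∑ₙ (1 - (1 - qⁿ)^M)` by the binomial theorem, the right side is `∑ₙ (1 - p^M)ⁿ`.
The comparison is termwise, `1 - (1 - p^M)ⁿ ≤ (1 - qⁿ)^M`: in an `n × M` grid of independent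
trials succeeding with probability `p`, if some row consists of successes only, then every
column contains a success.
-/

open Finset

theorem sum_Icc_choose_mul_neg_one_pow_mul_pow {R : Type*} [CommRing R] (M : ℕ) (y : R) :
    ∑ k ∈ Icc 1 M, (M.choose k : R) * (-1) ^ (k + 1) * y ^ k = 1 - (1 - y) ^ M := by
  have binomial := add_pow (-y) 1 M
  rw [range_eq_Ico, sum_eq_sum_Ico_succ_bot M.succ_pos, Nat.succ_eq_add_one, zero_add,
    Ico_add_one_right_eq_Icc, neg_add_eq_sub] at binomial
  rw [binomial, pow_zero, Nat.choose_zero_right, Nat.cast_one, one_pow, mul_one, mul_one,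
    sub_add_cancel_left, ← sum_neg_distrib]
  refine sum_congr rfl fun k _ ↦ ?_
  rw [neg_pow, one_pow, pow_succ]
  ring

/-- Two independent pairs of events: `P(A ∨ B) P(C ∨ D) ≥ P(A ∧ C) + P(¬(A ∧ C)) P(B ∧ D)`. -/
theorem mul_add_one_sub_mul_le {a b c d : ℝ} (ha₀ : 0 ≤ a) (ha₁ : a ≤ 1) (hb₀ : 0 ≤ b)
    (hb₁ : b ≤ 1) (hc₀ : 0 ≤ c) (hc₁ : c ≤ 1) (hd₀ : 0 ≤ d) (hd₁ : d ≤ 1) :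
    a * c + (1 - a * c) * (b * d) ≤ (a + (1 - a) * b) * (c + (1 - c) * d) := by
  nlinarith [mul_nonneg (mul_nonneg ha₀ hd₀) (mul_nonneg (sub_nonneg.2 hc₁) (sub_nonneg.2 hb₁)),
    mul_nonneg (mul_nonneg hb₀ hc₀) (mul_nonneg (sub_nonneg.2 ha₁) (sub_nonneg.2 hd₁))]

theorem pow_add_one_sub_pow_mul_pow_le {p x : ℝ} (hp₀ : 0 ≤ p) (hp₁ : p ≤ 1) (hx₀ : 0 ≤ x)
    (hx₁ : x ≤ 1) (M : ℕ) : p ^ M + (1 - p ^ M) * x ^ M ≤ (p + (1 - p) * x) ^ M := by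
  induction M with
  | zero => simp
  | succ n ih =>
    calc p ^ (n + 1) + (1 - p ^ (n + 1)) * x ^ (n + 1)
        ≤ (p ^ n + (1 - p ^ n) * x ^ n) * (p + (1 - p) * x) := by
          simpa only [pow_succ] using mul_add_one_sub_mul_le (pow_nonneg hp₀ n)
            (pow_le_one₀ hp₀ hp₁) (pow_nonneg hx₀ n) (pow_le_one₀ hx₀ hx₁) hp₀ hp₁ hx₀ hx₁
      _ ≤ (p + (1 - p) * x) ^ n * (p + (1 - p) * x) := by gcongr
      _ = (p + (1 - p) * x) ^ (n + 1) := (pow_succ _ _).symm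

theorem one_sub_one_sub_pow_pow_le {p : ℝ} (hp₀ : 0 ≤ p) (hp₁ : p ≤ 1) (M n : ℕ) :
    1 - (1 - p ^ M) ^ n ≤ (1 - (1 - p) ^ n) ^ M := by
  induction n with
  | zero => simp
  | succ n ih =>
    have hqn₀ : 0 ≤ (1 - p) ^ n := pow_nonneg (sub_nonneg.2 hp₁) n
    have hqn₁ : (1 - p) ^ n ≤ 1 := pow_le_one₀ (sub_nonneg.2 hp₁) (by linarith)
    calc 1 - (1 - p ^ M) ^ (n + 1) = p ^ M + (1 - p ^ M) * (1 - (1 - p ^ M) ^ n) := by ring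
      _ ≤ p ^ M + (1 - p ^ M) * (1 - (1 - p) ^ n) ^ M := by
          gcongr; exact sub_nonneg.2 (pow_le_one₀ hp₀ hp₁)
      _ ≤ (p + (1 - p) * (1 - (1 - p) ^ n)) ^ M :=
          pow_add_one_sub_pow_mul_pow_le hp₀ hp₁ (by linarith) (by linarith) M
      _ = (1 - (1 - p) ^ (n + 1)) ^ M := by ring

theorem hasSum_one_sub_one_sub_pow_pow {q : ℝ} (hq₀ : 0 ≤ q) (hq₁ : q < 1) (M : ℕ) :
    HasSum (fun n : ℕ ↦ 1 - (1 - q ^ n) ^ M)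
      (∑ k ∈ Icc 1 M, (M.choose k : ℝ) * (-1) ^ (k + 1) / (1 - q ^ k)) := by
  have geometric : ∀ k ∈ Icc 1 M,
      HasSum (fun n : ℕ ↦ (M.choose k : ℝ) * (-1) ^ (k + 1) * (q ^ k) ^ n)
        ((M.choose k : ℝ) * (-1) ^ (k + 1) / (1 - q ^ k)) := fun k hk ↦ by
    simpa only [div_eq_mul_inv] using (hasSum_geometric_of_lt_one (pow_nonneg hq₀ k)
      (pow_lt_one₀ hq₀ hq₁ (Nat.one_le_iff_ne_zero.1 (mem_Icc.1 hk).1))).mul_left _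
  convert hasSum_sum geometric using 1
  funext n
  simp_rw [← pow_mul, mul_comm _ n, pow_mul]
  exact (sum_Icc_choose_mul_neg_one_pow_mul_pow M (q ^ n)).symm

theorem expected_max_le_memoryless_general
    (M : ℕ) (p : ℝ) (hp0 : 0 < p) (hp1 : p ≤ 1) :
    ∑ k ∈ Finset.Icc 1 M, (M.choose k : ℝ) * (-1) ^ (k + 1) / (1 - (1 - p) ^ k)
      ≤ 1 / p ^ M := by
  have hpM₀ : 0 < p ^ M := pow_pos hp0 M
  have memoryless : HasSum (fun n : ℕ ↦ (1 - p ^ M) ^ n) (1 / p ^ M) := by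
    simpa using hasSum_geometric_of_lt_one (sub_nonneg.2 (pow_le_one₀ hp0.le hp1))
      (sub_lt_self 1 hpM₀)
  refine hasSum_le (fun n ↦ ?_) (hasSum_one_sub_one_sub_pow_pow (by linarith) (by linarith) M)
    memoryless
  linarith [one_sub_one_sub_pow_pow_le hp0.le hp1 M n]

/-- For every integer `M ≥ 1` and every real `0 < p ≤ 1`,
`Σ_{k=1}^M C(M,k) (-1)^(k+1) / (1 - (1-p)^k) ≤ 1 / p^M`. -/
theorem expected_max_le_memoryless
    (M : ℕ) (hM : 1 ≤ M) (p : ℝ) (hp0 : 0 < p) (hp1 : p ≤ 1) :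
    ∑ k ∈ Finset.Icc 1 M, (M.choose k : ℝ) * (-1) ^ (k + 1) / (1 - (1 - p) ^ k)
      ≤ 1 / p ^ M :=
  expected_max_le_memoryless_general M p hp0 hp1
end

section
/- Let M ≥ 1 and 0 < p ≤ 1, and let N_1, …, N_M be independent, identically distributed geometric random variables on the positive integers with Pr[N_i = k] = p(1−p)^{k−1} for k ≥ 1. Then E[max{N_1, …, N_M}] ≤ 1 / p^M. -/
open MeasureTheory ProbabilityTheory
open scoped ProbabilityTheory ENNReal

/-!
A union bound over the `M` variables gives `ℙ[max N > k] ≤ M (1 - p)^k`. Summing these tails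
(layer-cake formula for ℕ-valued variables), with the `k = 0` layer bounded by `1` instead,
yields `E[max N] ≤ 1 + M (1 - p) / p`, and Bernoulli's inequality
`(1 + (1 - p) / p)^M ≥ 1 + M (1 - p) / p` turns this into `1 / p^M`.
-/

theorem Finset.measurable_sup_apply {Ω ι α : Type*} [MeasurableSpace Ω] [MeasurableSpace α]
    [SemilatticeSup α] [OrderBot α] [MeasurableSup₂ α] (s : Finset ι) {f : ι → Ω → α}
    (hf : ∀ i ∈ s, Measurable (f i)) :
    Measurable fun ω => s.sup fun i => f i ω := by
  classical
  induction s using Finset.induction_on with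
  | empty => exact measurable_const
  | insert i s hi ih =>
    simp only [Finset.sup_insert]
    exact (hf i (s.mem_insert_self i)).sup (ih fun j hj => hf j (Finset.mem_insert_of_mem hj))

lemma measure_lt_finset_sup_le_sum {Ω ι : Type*} [MeasurableSpace Ω] (μ : Measure Ω)
    (s : Finset ι) (N : ι → Ω → ℕ) (k : ℕ) :
    μ {ω | k < s.sup fun i => N i ω} ≤ ∑ i ∈ s, μ {ω | k < N i ω} := by
  have hunion : {ω | k < s.sup fun i => N i ω} = ⋃ i ∈ s, {ω | k < N i ω} := by
    ext ω
    simp [Finset.lt_sup_iff]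
  exact hunion ▸ measure_biUnion_finset_le s _

lemma tsum_ite_lt_eq_natCast (n : ℕ) :
    ∑' k : ℕ, (if k < n then 1 else 0 : ℝ≥0∞) = n := by
  rw [tsum_eq_sum (s := Finset.range n) (fun k hk => by simpa using hk),
    Finset.sum_ite_of_true fun k hk => Finset.mem_range.mp hk]
  simp

lemma lintegral_natCast_eq_tsum_measure_lt {Ω : Type*} [MeasurableSpace Ω] (μ : Measure Ω)
    {X : Ω → ℕ} (hX : Measurable X) :
    ∫⁻ ω, (X ω : ℝ≥0∞) ∂μ = ∑' k : ℕ, μ {ω | k < X ω} := by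
  have hmeas (k : ℕ) : MeasurableSet {ω | k < X ω} := hX measurableSet_Ioi
  simp_rw [← lintegral_indicator_one (hmeas _)]
  rw [← lintegral_tsum fun k => (measurable_one.indicator (hmeas k)).aemeasurable]
  congr with ω
  simp [Set.indicator_apply, tsum_ite_lt_eq_natCast]

lemma ENNReal.one_sub_ofReal_one_sub {p : ℝ} (hp : p ≤ 1) :
    1 - ENNReal.ofReal (1 - p) = ENNReal.ofReal p := by
  rw [← ENNReal.ofReal_one, ← ENNReal.ofReal_sub _ (by linarith), _root_.sub_sub_cancel]

lemma measure_lt_le_of_geometric {Ω : Type*} [MeasurableSpace Ω] (μ : Measure Ω)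
    {p : ℝ} (hp0 : 0 < p) (hp1 : p ≤ 1) {X : Ω → ℕ}
    (hX : ∀ k : ℕ, 1 ≤ k → μ {ω | X ω = k} = ENNReal.ofReal (p * (1 - p) ^ (k - 1)))
    (k : ℕ) : μ {ω | k < X ω} ≤ ENNReal.ofReal (1 - p) ^ k := by
  have hunion : {ω | k < X ω} = ⋃ j : ℕ, {ω | X ω = k + j + 1} := by
    ext ω
    simp only [Set.mem_ofPred_eq, Set.mem_iUnion]
    exact ⟨fun h => ⟨X ω - k - 1, by omega⟩, fun ⟨j, hj⟩ => by omega⟩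
  set q := ENNReal.ofReal (1 - p)
  calc μ {ω | k < X ω}
      ≤ ∑' j : ℕ, μ {ω | X ω = k + j + 1} := hunion ▸ measure_iUnion_le _
    _ = ∑' j : ℕ, ENNReal.ofReal p * (q ^ k * q ^ j) := by
        refine tsum_congr fun j => ?_
        rw [hX _ (by omega), Nat.add_sub_cancel, ENNReal.ofReal_mul hp0.le,
          ENNReal.ofReal_pow (by linarith), pow_add]
    _ = q ^ k := by
        rw [ENNReal.tsum_mul_left, ENNReal.tsum_mul_left, ENNReal.tsum_geometric,
          ENNReal.one_sub_ofReal_one_sub hp1, mul_comm, mul_assoc,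
          ENNReal.inv_mul_cancel (by simpa using hp0) ENNReal.ofReal_ne_top, mul_one]

lemma one_add_mul_one_sub_div_le_one_div_pow {p : ℝ} (hp0 : 0 < p) (n : ℕ) :
    1 + n * ((1 - p) / p) ≤ 1 / p ^ n := by
  have hbase : 1 + (1 - p) / p = 1 / p := by field_simp; ring
  have hge : -2 ≤ (1 - p) / p := by
    have : 0 < 1 / p := by positivity
    linarith
  simpa only [hbase, one_div_pow] using one_add_mul_le_pow hge n

theorem max_geometric_expectation_upper_bound_general
    {Ω : Type*} [MeasureSpace Ω] [IsProbabilityMeasure (ℙ : Measure Ω)]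
    (M : ℕ) (p : ℝ) (hp0 : 0 < p) (hp1 : p ≤ 1)
    (N : Fin M → Ω → ℕ) (hmeas : ∀ i, Measurable (N i))
    (hgeom : ∀ i, ∀ k : ℕ, 1 ≤ k →
      ℙ {ω | N i ω = k} = ENNReal.ofReal (p * (1 - p) ^ (k - 1))) :
    ∫⁻ ω, ((Finset.univ.sup fun i => N i ω : ℕ) : ℝ≥0∞) ∂ℙ
      ≤ ENNReal.ofReal (1 / p ^ M) := by
  set r := ENNReal.ofReal (1 - p)
  have htail (k : ℕ) : ℙ {ω | k < Finset.univ.sup fun i => N i ω} ≤ M * r ^ k :=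
    calc _ ≤ ∑ i, ℙ {ω | k < N i ω} := measure_lt_finset_sup_le_sum _ _ _ k
      _ ≤ ∑ _i : Fin M, r ^ k :=
        Finset.sum_le_sum fun i _ => measure_lt_le_of_geometric _ hp0 hp1 (hgeom i) k
      _ = M * r ^ k := by simp
  calc ∫⁻ ω, ((Finset.univ.sup fun i => N i ω : ℕ) : ℝ≥0∞) ∂ℙ
      = ∑' k : ℕ, ℙ {ω | k < Finset.univ.sup fun i => N i ω} :=
        lintegral_natCast_eq_tsum_measure_lt _
          (Finset.univ.measurable_sup_apply fun i _ => hmeas i)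
    _ = ℙ {ω | 0 < Finset.univ.sup fun i => N i ω}
          + ∑' k : ℕ, ℙ {ω | k + 1 < Finset.univ.sup fun i => N i ω} :=
        tsum_eq_zero_add' ENNReal.summable
    _ ≤ 1 + ∑' k : ℕ, M * r ^ (k + 1) :=
        add_le_add prob_le_one (ENNReal.tsum_le_tsum fun k => htail (k + 1))
    _ = ENNReal.ofReal (1 + M * ((1 - p) / p)) := by
        rw [ENNReal.tsum_mul_left, ENNReal.tsum_geometric_add_one,
          ENNReal.one_sub_ofReal_one_sub hp1, ENNReal.ofReal_add zero_le_one
            (mul_nonneg M.cast_nonneg (div_nonneg (sub_nonneg.2 hp1) hp0.le)),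
          ENNReal.ofReal_one, ENNReal.ofReal_mul M.cast_nonneg, ENNReal.ofReal_natCast,
          ENNReal.ofReal_div_of_pos hp0, div_eq_mul_inv]
    _ ≤ ENNReal.ofReal (1 / p ^ M) :=
        ENNReal.ofReal_le_ofReal (one_add_mul_one_sub_div_le_one_div_pow hp0 M)

/-- For `M ≥ 1` i.i.d. geometric random variables `N_1, …, N_M` on the positive integers
with `Pr[N_i = k] = p (1-p)^(k-1)` for `k ≥ 1`, the expectation of the maximum satisfies
`E[max_i N_i] ≤ 1 / p^M`. -/
theorem max_geometric_expectation_upper_bound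
    {Ω : Type*} [MeasureSpace Ω] [IsProbabilityMeasure (ℙ : Measure Ω)]
    (M : ℕ) (hM : 1 ≤ M) (p : ℝ) (hp0 : 0 < p) (hp1 : p ≤ 1)
    (N : Fin M → Ω → ℕ) (hmeas : ∀ i, Measurable (N i))
    (hindep : iIndepFun N ℙ)
    (hgeom : ∀ i, ∀ k : ℕ, 1 ≤ k →
      ℙ {ω | N i ω = k} = ENNReal.ofReal (p * (1 - p) ^ (k - 1))) :
    ∫⁻ ω, ((Finset.univ.sup fun i => N i ω : ℕ) : ℝ≥0∞) ∂ℙ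
      ≤ ENNReal.ofReal (1 / p ^ M) :=
  max_geometric_expectation_upper_bound_general M p hp0 hp1 N hmeas hgeom
end
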